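/- (Validity of the maximally-loaded-stations dominance rule.) There exists an optimal feasible U-line balance (S₁, …, S_m; σ) of T in which every station is maximally loaded: for every station index k < m, there is no task j assigned to a station later than k such that t_j ≤ c − ∑_{i∈S_k} t_i and j is available with respect to the assigned set A_k = S₁∪…∪S_k (i.e., every predecessor of j lies in A_k, or every successor of j lies in A_k). Equivalently, any feasible U-line balance containing a station that is not maximally loaded is dominated by a feasible U-line balance with no more stations in which all stations are maximally loaded. -/

import Mathlib

open Finset

/-- A feasible U-line balance of the task set `T`: stations `B` in order,
underlying task ordering `σ = B.flatten`, where every task must be forward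
available (all its predecessors occur earlier in `σ`) or backward available
(all its successors occur earlier in `σ`) at its position. -/
def IsUBalance {ι : Type*} (T : Finset ι) (t : ι → ℕ) (c : ℕ)
    (prec : ι → ι → Prop) (B : List (List ι)) : Prop :=
  B.flatten.Nodup ∧
  (∀ j, j ∈ B.flatten ↔ j ∈ T) ∧
  (∀ b ∈ B, b ≠ [] ∧ (b.map t).sum ≤ c) ∧
  ∀ i (h : i < B.flatten.length),
    (∀ k ∈ T, prec k (B.flatten.get ⟨i, h⟩) → k ∈ B.flatten.take i) ∨
    (∀ k ∈ T, prec (B.flatten.get ⟨i, h⟩) k → k ∈ B.flatten.take i)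

/-- Task `j` is available with respect to the set `A` of already assigned tasks:
every predecessor of `j` lies in `A`, or every successor of `j` lies in `A`. -/
def AvailWrt {ι : Type*} (T : Finset ι) (prec : ι → ι → Prop)
    (A : List ι) (j : ι) : Prop :=
  (∀ i ∈ T, prec i j → i ∈ A) ∨ (∀ i ∈ T, prec j i → i ∈ A)

/-- Every station of the balance `B` is maximally loaded: for every station
index `k`, there is no task `j` assigned to a later station that would still fit
in station `k` (`t j` at most the idle time of station `k`) and is available
with respect to the set of tasks assigned to stations `1, …, k`. -/
def MaximallyLoaded {ι : Type*} (T : Finset ι) (t : ι → ℕ) (c : ℕ)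
    (prec : ι → ι → Prop) (B : List (List ι)) : Prop :=
  ∀ (k : ℕ) (hk : k < B.length), ∀ j ∈ (B.drop (k + 1)).flatten,
    ¬ (((B.get ⟨k, hk⟩).map t).sum + t j ≤ c ∧
        AvailWrt T prec ((B.take (k + 1)).flatten) j)


/-!
Exchange argument. If station `k` is not maximally loaded, some task `j` of a later station fits
into the idle time of station `k` and is available with respect to `S₁ ∪ … ∪ S_k`. Moving `j` to
the end of station `k` (and deleting its old station if it becomes empty) keeps the balance
feasible: `j` is available at its new position, and every other task only gains predecessors in
the sequence. The number of stations does not grow, while the sum over all tasks of the index of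
their station strictly drops, so repeating the move terminates at a maximally loaded balance.
Applied to a balance with the minimum number of stations, this gives an optimal one.
-/

section

variable {ι : Type*} {T : Finset ι} {t : ι → ℕ} {c : ℕ} {prec : ι → ι → Prop}

theorem AvailWrt.mono {A A' : List ι} {j : ι} (h : AvailWrt T prec A j) (hA : A ⊆ A') :
    AvailWrt T prec A' j :=
  h.imp (fun h i hi hp => hA (h i hi hp)) (fun h i hi hp => hA (h i hi hp))

def IsFeasibleOrder (T : Finset ι) (prec : ι → ι → Prop) (σ : List ι) : Prop :=
  ∀ i (h : i < σ.length), AvailWrt T prec (σ.take i) (σ.get ⟨i, h⟩)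

theorem isFeasibleOrder_append_singleton {σ : List ι} {x : ι} :
    IsFeasibleOrder T prec (σ ++ [x]) ↔ IsFeasibleOrder T prec σ ∧ AvailWrt T prec σ x := by
  constructor
  · intro h
    refine ⟨fun i hi => ?_, ?_⟩
    · have := h i (by simp; omega)
      simpa [List.take_append_of_le_length hi.le, List.getElem_append_left hi] using this
    · simpa using h σ.length (by simp)
  · rintro ⟨hσ, hx⟩ i hi
    rcases (Nat.lt_succ_iff_lt_or_eq.mp (by simpa using hi)) with hi | rfl
    · simpa [List.take_append_of_le_length hi.le, List.getElem_append_left hi] using hσ i hi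
    · simpa using hx

theorem IsFeasibleOrder.insert {A R : List ι} {j : ι} (h : IsFeasibleOrder T prec (A ++ R))
    (hj : AvailWrt T prec A j) : IsFeasibleOrder T prec (A ++ j :: R) := by
  induction R using List.reverseRecOn with
  | nil => exact isFeasibleOrder_append_singleton.mpr ⟨by simpa using h, hj⟩
  | append_singleton R y ih =>
    rw [← List.append_assoc, isFeasibleOrder_append_singleton] at h
    rw [← List.cons_append, ← List.append_assoc, isFeasibleOrder_append_singleton]
    exact ⟨ih h.1, h.2.mono fun a => by simp; tauto⟩

theorem IsFeasibleOrder.move {A R₁ R₂ : List ι} {j : ι}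
    (h : IsFeasibleOrder T prec (A ++ R₁ ++ j :: R₂)) (hj : AvailWrt T prec A j) :
    IsFeasibleOrder T prec (A ++ j :: (R₁ ++ R₂)) := by
  induction R₂ using List.reverseRecOn with
  | nil =>
    rw [isFeasibleOrder_append_singleton] at h
    simpa using h.1.insert hj
  | append_singleton R₂ z ih =>
    rw [← List.cons_append, ← List.append_assoc, isFeasibleOrder_append_singleton] at h
    rw [← List.append_assoc, ← List.cons_append, ← List.append_assoc,
      isFeasibleOrder_append_singleton]
    exact ⟨ih h.1, h.2.mono fun a => by simp; tauto⟩

/-- The sum over all tasks of the index of their station. -/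
def stationIndexSum : List (List ι) → ℕ
  | [] => 0
  | _ :: B => B.flatten.length + stationIndexSum B

theorem stationIndexSum_append (B B' : List (List ι)) :
    stationIndexSum (B ++ B') =
      stationIndexSum B + B.length * B'.flatten.length + stationIndexSum B' := by
  induction B with
  | nil => simp [stationIndexSum]
  | cons s B ih => simp only [List.cons_append, stationIndexSum, ih, List.flatten_append,
      List.length_append, List.length_cons]; ring

theorem stationIndexSum_filter_le (B : List (List ι)) :
    stationIndexSum (B.filter (· ≠ [])) ≤ stationIndexSum B := by
  induction B with
  | nil => simp
  | cons s B ih =>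
    by_cases hs : s = []
    · simp only [List.filter_cons_of_neg (p := fun s => decide (s ≠ [])) (by simpa using hs),
        stationIndexSum]
      omega
    · simp only [List.filter_cons_of_pos (p := fun s => decide (s ≠ [])) (by simpa using hs),
        stationIndexSum, List.flatten_filter_ne_nil]
      omega

theorem stationIndexSum_move_lt (C D E : List (List ι)) (s b₁ b₂ : List ι) (j : ι) :
    stationIndexSum (C ++ (s ++ [j]) :: (D ++ (b₁ ++ b₂) :: E)) <
      stationIndexSum (C ++ s :: (D ++ (b₁ ++ j :: b₂) :: E)) := by
  simp only [stationIndexSum_append, stationIndexSum, List.flatten_append, List.flatten_cons,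
    List.length_append, List.length_cons, List.length_nil]
  nlinarith

theorem IsUBalance.move {C D E : List (List ι)} {s b₁ b₂ : List ι} {j : ι}
    (hB : IsUBalance T t c prec (C ++ s :: (D ++ (b₁ ++ j :: b₂) :: E)))
    (hfit : (s.map t).sum + t j ≤ c) (hj : AvailWrt T prec (C.flatten ++ s) j) :
    IsUBalance T t c prec ((C ++ (s ++ [j]) :: (D ++ (b₁ ++ b₂) :: E)).filter (· ≠ [])) := by
  obtain ⟨hnodup, hmem, hload, hfeas⟩ := hB
  have hold : (C ++ s :: (D ++ (b₁ ++ j :: b₂) :: E)).flatten =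
      C.flatten ++ s ++ (D.flatten ++ b₁) ++ j :: (b₂ ++ E.flatten) := by simp
  have hnew : ((C ++ (s ++ [j]) :: (D ++ (b₁ ++ b₂) :: E)).filter (· ≠ [])).flatten =
      C.flatten ++ s ++ j :: (D.flatten ++ b₁ ++ (b₂ ++ E.flatten)) := by
    rw [List.flatten_filter_ne_nil]; simp
  have hperm : (C ++ s :: (D ++ (b₁ ++ j :: b₂) :: E)).flatten.Perm
      ((C ++ (s ++ [j]) :: (D ++ (b₁ ++ b₂) :: E)).filter (· ≠ [])).flatten := by
    rw [hold, hnew]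
    simpa using (List.perm_middle (l₁ := D.flatten ++ b₁)).append_left (C.flatten ++ s)
  refine ⟨hperm.nodup_iff.mp hnodup, fun a => hperm.mem_iff.symm.trans (hmem a), ?_, ?_⟩
  · intro b hb
    obtain ⟨hb, hne⟩ := List.mem_filter.mp hb
    refine ⟨by simpa using hne, ?_⟩
    have hload' : ∀ b ∈ C ++ s :: (D ++ (b₁ ++ j :: b₂) :: E), (b.map t).sum ≤ c :=
      fun b hb => (hload b hb).2
    simp only [List.mem_append, List.mem_cons] at hb
    rcases hb with hC | rfl | hD | rfl | hE
    · exact hload' b (by simp [hC])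
    · simpa using hfit
    · exact hload' b (by simp [hD])
    · have := hload' (b₁ ++ j :: b₂) (by simp)
      simp only [List.map_append, List.map_cons, List.sum_append, List.sum_cons] at this ⊢
      omega
    · exact hload' b (by simp [hE])
  · change IsFeasibleOrder T prec _
    rw [hnew]
    exact (hold ▸ hfeas : IsFeasibleOrder T prec _).move hj

theorem exists_decomposition_of_not_maximallyLoaded {B : List (List ι)}
    (h : ¬ MaximallyLoaded T t c prec B) :
    ∃ C s D b₁ j b₂ E, B = C ++ s :: (D ++ (b₁ ++ j :: b₂) :: E) ∧
      (s.map t).sum + t j ≤ c ∧ AvailWrt T prec (C.flatten ++ s) j := by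
  simp only [MaximallyLoaded, not_forall, not_not] at h
  obtain ⟨k, hk, j, hj, hfit, havail⟩ := h
  obtain ⟨b, hbD, hjb⟩ := List.mem_flatten.mp hj
  obtain ⟨D, E, hD⟩ := List.append_of_mem hbD
  obtain ⟨b₁, b₂, rfl⟩ := List.append_of_mem hjb
  have hB : B = B.take k ++ B[k] :: B.drop (k + 1) := by
    rw [← List.drop_eq_getElem_cons hk, List.take_append_drop]
  have htake : (B.take (k + 1)).flatten = (B.take k).flatten ++ B[k] := by
    rw [List.take_succ_eq_append_getElem hk, List.flatten_append, List.flatten_singleton]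
  refine ⟨B.take k, B[k], D, b₁, j, b₂, E, hD ▸ hB, hfit, htake ▸ havail⟩

theorem IsUBalance.exists_stationIndexSum_lt {B : List (List ι)} (hB : IsUBalance T t c prec B)
    (h : ¬ MaximallyLoaded T t c prec B) :
    ∃ B', IsUBalance T t c prec B' ∧ B'.length ≤ B.length ∧
      stationIndexSum B' < stationIndexSum B := by
  obtain ⟨C, s, D, b₁, j, b₂, E, rfl, hfit, hj⟩ := exists_decomposition_of_not_maximallyLoaded h
  refine ⟨_, hB.move hfit hj, (List.length_filter_le _ _).trans (by simp), ?_⟩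
  exact (stationIndexSum_filter_le _).trans_lt (stationIndexSum_move_lt C D E s b₁ b₂ j)

theorem IsUBalance.exists_maximallyLoaded {B : List (List ι)} (hB : IsUBalance T t c prec B) :
    ∃ B', IsUBalance T t c prec B' ∧ B'.length ≤ B.length ∧ MaximallyLoaded T t c prec B' := by
  induction B using (measure stationIndexSum).wf.induction with
  | h B ih =>
    by_cases hML : MaximallyLoaded T t c prec B
    · exact ⟨B, hB, le_rfl, hML⟩
    obtain ⟨B', hB', hlen, hlt⟩ := hB.exists_stationIndexSum_lt hML
    obtain ⟨B'', hB'', hlen', hML''⟩ := ih B' hlt hB'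
    exact ⟨B'', hB'', hlen'.trans hlen, hML''⟩

end

theorem maximally_loaded_dominance_general {ι : Type*}
    (T : Finset ι) (t : ι → ℕ) (c : ℕ)
    (prec : ι → ι → Prop)
    (hex : ∃ B : List (List ι), IsUBalance T t c prec B) :
    (∃ B : List (List ι), IsUBalance T t c prec B ∧
        (∀ B' : List (List ι), IsUBalance T t c prec B' →
          B.length ≤ B'.length) ∧
        MaximallyLoaded T t c prec B) ∧
    (∀ B : List (List ι), IsUBalance T t c prec B →
      ∃ B' : List (List ι), IsUBalance T t c prec B' ∧
        B'.length ≤ B.length ∧ MaximallyLoaded T t c prec B') := by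
  refine ⟨?_, fun B hB => hB.exists_maximallyLoaded⟩
  obtain ⟨Bmin, hBmin, hmin⟩ :=
    (measure List.length).wf.has_min {B | IsUBalance T t c prec B} hex
  obtain ⟨B, hB, hlen, hML⟩ := IsUBalance.exists_maximallyLoaded hBmin
  exact ⟨B, hB, fun B' hB' => hlen.trans (not_lt.mp (hmin B' hB')), hML⟩

/-- Validity of the maximally-loaded-stations dominance rule:
provided some feasible U-line balance exists, there exists an optimal feasible
U-line balance all of whose stations are maximally loaded; equivalently, every
feasible U-line balance is dominated by a feasible U-line balance with no more
stations in which all stations are maximally loaded. -/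
theorem maximally_loaded_dominance {ι : Type*} [DecidableEq ι]
    (T : Finset ι) (t : ι → ℕ) (c : ℕ) (hc : 0 < c)
    (ht : ∀ j ∈ T, 0 < t j) (htc : ∀ j ∈ T, t j ≤ c)
    (prec : ι → ι → Prop)
    (hacyc : ∀ j, ¬ Relation.TransGen prec j j)
    (hex : ∃ B : List (List ι), IsUBalance T t c prec B) :
    (∃ B : List (List ι), IsUBalance T t c prec B ∧
        (∀ B' : List (List ι), IsUBalance T t c prec B' →
          B.length ≤ B'.length) ∧
        MaximallyLoaded T t c prec B) ∧
    (∀ B : List (List ι), IsUBalance T t c prec B →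
      ∃ B' : List (List ι), IsUBalance T t c prec B' ∧
        B'.length ≤ B.length ∧ MaximallyLoaded T t c prec B') :=
  maximally_loaded_dominance_general T t c prec hex
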